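/- (Lemma 2.6, case 𝔉 = 𝔘.) Let G be a finite soluble 𝔘-critical group, i.e. G is soluble, not supersoluble, and every proper subgroup of G is supersoluble. Then every non-identity subgroup of G containing Φ(G) ∩ G^𝔘 is either 𝔘-subnormal or 𝔘-abnormal in G. -/

import Mathlib

open Subgroup

/-- A finite group is *supersolvable* if it has a chain of subgroups
`⊥ = G_0 ≤ G_1 ≤ ⋯ ≤ G_n = ⊤`, each normal in `G`, with each successive quotient cyclic. -/
def IsSupersolvableGroup (G : Type*) [Group G] : Prop :=
  ∃ (n : ℕ) (c : Fin (n + 1) → Subgroup G) (_ : ∀ i, (c i).Normal),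
    Monotone c ∧ c 0 = ⊥ ∧ c (Fin.last n) = ⊤ ∧
    ∀ i : Fin n,
      IsCyclic (↥(c i.succ) ⧸ ((c i.castSucc).subgroupOf (c i.succ)))

/-- `K` is a maximal subgroup of `L` (both viewed as subgroups of an ambient group). -/
def IsMaximalSubgroupOf {G : Type*} [Group G] (K L : Subgroup G) : Prop :=
  K < L ∧ ∀ X : Subgroup G, K ≤ X → X ≤ L → X = K ∨ X = L

/-- `H` is 𝔘-subnormal in `G`. -/
def USubnormal {G : Type*} [Group G] (H : Subgroup G) : Prop :=
  H ≠ ⊤ ∧ ∃ (n : ℕ) (c : Fin (n + 1) → Subgroup G),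
    c 0 = H ∧ c (Fin.last n) = ⊤ ∧
    ∀ i : Fin n, IsMaximalSubgroupOf (c i.castSucc) (c i.succ) ∧
      IsSupersolvableGroup
        (↥(c i.succ) ⧸ ((c i.castSucc).subgroupOf (c i.succ)).normalCore)

/-- `H` is 𝔘-abnormal in `G`. -/
def UAbnormal {G : Type*} [Group G] (H : Subgroup G) : Prop :=
  ∀ K L : Subgroup G, H ≤ K → IsMaximalSubgroupOf K L →
    ¬ IsSupersolvableGroup (↥L ⧸ (K.subgroupOf L).normalCore)

/-- `G` is an `E_𝔘`-group. -/
def IsEUGroup (G : Type*) [Group G] : Prop :=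
  ¬ IsSupersolvableGroup G ∧ ∀ H : Subgroup G, H ≠ ⊥ → USubnormal H ∨ UAbnormal H

/-- The supersoluble residual `G^𝔘`. -/
def uResidual (G : Type*) [Group G] : Subgroup G :=
  sInf {N : Subgroup G | ∃ h : N.Normal, letI := h; IsSupersolvableGroup (G ⧸ N)}

instance uResidual_normal (G : Type*) [Group G] : (uResidual G).Normal := by
  constructor
  intro n hn g
  rw [uResidual, Subgroup.mem_sInf] at hn ⊢
  rintro N hN
  obtain ⟨h1, h2⟩ := hN
  exact h1.conj_mem n (hn N ⟨h1, h2⟩) g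

/-- Hall subgroup. -/
def IsHallSubgroup {G : Type*} [Group G] (H : Subgroup G) : Prop :=
  Nat.Coprime (Nat.card H) H.index

/-- Gaschütz subgroup. -/
def IsGaschuetzSubgroup {G : Type*} [Group G] (H : Subgroup G) : Prop :=
  IsSupersolvableGroup ↥H ∧
    ∀ K L : Subgroup G, H ≤ K → K ≤ L → ¬ (K.relIndex L).Prime

/-- ℙ-subnormal subgroup. -/
def PSubnormal {G : Type*} [Group G] (H : Subgroup G) : Prop :=
  H ≠ ⊤ ∧ ∃ (n : ℕ) (c : Fin (n + 1) → Subgroup G),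
    c 0 = H ∧ c (Fin.last n) = ⊤ ∧
    ∀ i : Fin n, c i.castSucc < c i.succ ∧ ((c i.castSucc).relIndex (c i.succ)).Prime

/-- ℙ-abnormal subgroup. -/
def PAbnormal {G : Type*} [Group G] (H : Subgroup G) : Prop :=
  ∀ K L : Subgroup G, H ≤ K → K ≤ L → ¬ (K.relIndex L).Prime

/-- A Miller–Moreno group: non-abelian, all proper subgroups abelian. -/
def IsMillerMoreno (X : Type*) [Group X] : Prop :=
  (¬ ∀ a b : X, a * b = b * a) ∧ ∀ H : Subgroup X, H ≠ ⊤ → ∀ a b : ↥H, a * b = b * a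

/-- Abelian group of prime power order. -/
def IsAbelianOfPrimePowerOrder (X : Type*) [Group X] : Prop :=
  (∀ a b : X, a * b = b * a) ∧ ∃ p k : ℕ, Nat.Prime p ∧ Nat.card X = p ^ k

/-- Minimal normal subgroup. -/
def IsMinimalNormalSubgroup {G : Type*} [Group G] (N : Subgroup G) : Prop :=
  N ≠ ⊥ ∧ N.Normal ∧ ∀ X : Subgroup G, X.Normal → X ≠ ⊥ → X ≤ N → X = N

/-- Every chief factor of `G` below `D` is non-cyclic. -/
def ChiefFactorsBelowNoncyclic {G : Type*} [Group G] (D : Subgroup G) : Prop :=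
  ∀ (L K : Subgroup G) [L.Normal] [K.Normal], L ≤ K → K ≤ D →
    IsMinimalNormalSubgroup (K.map (QuotientGroup.mk' L)) →
    ¬ IsCyclic ↥(K.map (QuotientGroup.mk' L))

instance phiIntNormal (G : Type*) [Group G] : (frattini G ⊓ uResidual G).Normal := by
  constructor
  intro n hn g
  rw [Subgroup.mem_inf] at hn ⊢
  exact ⟨(Subgroup.normal_of_characteristic (frattini G)).conj_mem n hn.1 g,
    (uResidual_normal G).conj_mem n hn.2 g⟩

/-- The Fitting subgroup: generated by all nilpotent normal subgroups. -/
def fittingSubgroup (G : Type*) [Group G] : Subgroup G :=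
  sSup {N : Subgroup G | N.Normal ∧ Group.IsNilpotent ↥N}


section SSAux

open Function

variable {G : Type*} {H : Type*} [Group G] [Group H]

private lemma USS.isCyclic_of_injective {A B : Type*} [Group A] [Group B] (f : A →* B)
    (hf : Function.Injective f) (h : IsCyclic B) : IsCyclic A :=
  isCyclic_of_surjective _ (MonoidHom.ofInjective hf).symm.surjective

private lemma USS.isCyclic_selfquot (B : Subgroup G) (hn : (B.subgroupOf B).Normal) :
    IsCyclic (↥B ⧸ B.subgroupOf B) := by
  haveI : Subsingleton (↥B ⧸ B.subgroupOf B) := by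
    constructor
    intro a b
    refine QuotientGroup.induction_on a fun x => QuotientGroup.induction_on b fun y => ?_
    rw [QuotientGroup.eq]
    exact Subgroup.mem_subgroupOf.mpr ((x⁻¹ * y : ↥B)).2
  infer_instance

private lemma USS.subquot_surj (f : G →* H) (A' B' : Subgroup G) (A B : Subgroup H)
    (hn' : (A'.subgroupOf B').Normal) (hn : (A.subgroupOf B).Normal)
    (hB' : ∀ x ∈ B', f x ∈ B) (hA' : ∀ x ∈ A', f x ∈ A)
    (hsurj : ∀ y ∈ B, ∃ x ∈ B', f x = y) :
    ∃ g : (↥B' ⧸ A'.subgroupOf B') →* (↥B ⧸ A.subgroupOf B), Function.Surjective g := by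
  let φ : ↥B' →* ↥B := (f.comp B'.subtype).codRestrict B (fun x => hB' x x.2)
  let ψ : ↥B' →* ↥B ⧸ A.subgroupOf B := (QuotientGroup.mk' _).comp φ
  have hker : A'.subgroupOf B' ≤ ψ.ker := by
    intro x hx
    have hx' : (x : G) ∈ A' := Subgroup.mem_subgroupOf.mp hx
    show (QuotientGroup.mk' (A.subgroupOf B)) (φ x) = 1
    rw [QuotientGroup.mk'_apply, QuotientGroup.eq_one_iff]
    exact Subgroup.mem_subgroupOf.mpr (hA' _ hx')
  refine ⟨QuotientGroup.lift _ ψ hker, ?_⟩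
  intro z
  refine QuotientGroup.induction_on z ?_
  rintro ⟨y, hy⟩
  obtain ⟨x, hx, hfx⟩ := hsurj y hy
  refine ⟨QuotientGroup.mk (⟨x, hx⟩ : ↥B'), ?_⟩
  rw [QuotientGroup.lift_mk]
  show QuotientGroup.mk (φ ⟨x, hx⟩) = QuotientGroup.mk (⟨y, hy⟩ : ↥B)
  congr 1
  exact Subtype.ext hfx

private lemma USS.subquot_inj (f : G →* H) (A' B' : Subgroup G) (A B : Subgroup H)
    (hn' : (A'.subgroupOf B').Normal) (hn : (A.subgroupOf B).Normal)
    (hB' : ∀ x ∈ B', f x ∈ B) (hA' : ∀ x ∈ A', f x ∈ A)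
    (hk : ∀ x ∈ B', f x ∈ A → x ∈ A') :
    ∃ g : (↥B' ⧸ A'.subgroupOf B') →* (↥B ⧸ A.subgroupOf B), Function.Injective g := by
  let φ : ↥B' →* ↥B := (f.comp B'.subtype).codRestrict B (fun x => hB' x x.2)
  let ψ : ↥B' →* ↥B ⧸ A.subgroupOf B := (QuotientGroup.mk' _).comp φ
  have hker : A'.subgroupOf B' ≤ ψ.ker := by
    intro x hx
    have hx' : (x : G) ∈ A' := Subgroup.mem_subgroupOf.mp hx
    show (QuotientGroup.mk' (A.subgroupOf B)) (φ x) = 1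
    rw [QuotientGroup.mk'_apply, QuotientGroup.eq_one_iff]
    exact Subgroup.mem_subgroupOf.mpr (hA' _ hx')
  refine ⟨QuotientGroup.lift _ ψ hker, ?_⟩
  rw [injective_iff_map_eq_one]
  intro a
  refine QuotientGroup.induction_on a ?_
  intro x hx1
  rw [QuotientGroup.lift_mk] at hx1
  have h2 : (φ x : H) ∈ A := by
    have := (QuotientGroup.eq_one_iff (φ x)).mp hx1
    exact Subgroup.mem_subgroupOf.mp this
  have hxA : (x : G) ∈ A' := hk _ x.2 h2
  exact (QuotientGroup.eq_one_iff x).mpr (Subgroup.mem_subgroupOf.mpr hxA)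

end SSAux
section SSAux2

open Function

variable {G : Type*} {H : Type*} [Group G] [Group H]

private lemma USS.supersolvable_of_surjective (f : G →* H) (hf : Function.Surjective f)
    (h : IsSupersolvableGroup G) : IsSupersolvableGroup H := by
  obtain ⟨n, c, hnorm, hmono, h0, htop, hcyc⟩ := h
  refine ⟨n, fun i => (c i).map f, fun i => (hnorm i).map f hf,
    fun i j hij => Subgroup.map_mono (hmono hij),
    ?_, ?_, fun i => ?_⟩
  · beta_reduce; rw [h0, Subgroup.map_bot]
  · beta_reduce; rw [htop, Subgroup.map_top_of_surjective f hf]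
  · beta_reduce
    haveI := ((hnorm i.castSucc).map f hf).subgroupOf ((c i.succ).map f)
    obtain ⟨g, hg⟩ := USS.subquot_surj f (c i.castSucc) (c i.succ)
      ((c i.castSucc).map f) ((c i.succ).map f)
      ((hnorm i.castSucc).subgroupOf _) (((hnorm i.castSucc).map f hf).subgroupOf _)
      (fun x hx => Subgroup.mem_map_of_mem f hx) (fun x hx => Subgroup.mem_map_of_mem f hx)
      (fun y hy => by obtain ⟨x, hx, rfl⟩ := Subgroup.mem_map.mp hy; exact ⟨x, hx, rfl⟩)
    haveI := hcyc i
    exact isCyclic_of_surjective g hg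

private lemma USS.supersolvable_of_injective (f : G →* H) (hf : Function.Injective f)
    (h : IsSupersolvableGroup H) : IsSupersolvableGroup G := by
  obtain ⟨n, c, hnorm, hmono, h0, htop, hcyc⟩ := h
  refine ⟨n, fun i => (c i).comap f, fun i => (hnorm i).comap f,
    fun i j hij => Subgroup.comap_mono (hmono hij),
    ?_, ?_, fun i => ?_⟩
  · beta_reduce; rw [h0, MonoidHom.comap_bot, MonoidHom.ker_eq_bot_iff f |>.mpr hf]
  · beta_reduce; rw [htop, Subgroup.comap_top]
  · beta_reduce
    haveI := ((hnorm i.castSucc).comap f).subgroupOf ((c i.succ).comap f)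
    obtain ⟨g, hg⟩ := USS.subquot_inj f ((c i.castSucc).comap f) ((c i.succ).comap f)
      (c i.castSucc) (c i.succ)
      (((hnorm i.castSucc).comap f).subgroupOf _) ((hnorm i.castSucc).subgroupOf _)
      (fun x hx => hx) (fun x hx => hx) (fun x _ hx => hx)
    exact USS.isCyclic_of_injective g hg (hcyc i)


private lemma USS.isCyclic_congr {A' B' A B : Subgroup G}
    (hn' : (A'.subgroupOf B').Normal) (hn : (A.subgroupOf B).Normal)
    (hA : A' = A) (hB : B' = B) (h : IsCyclic (↥B ⧸ A.subgroupOf B)) :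
    IsCyclic (↥B' ⧸ A'.subgroupOf B') := by
  subst hA; subst hB; exact h

/-- auxiliary: chains of normal subgroups indexed by ℕ -/
private def USS.NChainFrom {G : Type*} [Group G] (N : Subgroup G) : Prop :=
  ∃ (n : ℕ) (c : ℕ → Subgroup G) (_ : ∀ i, (c i).Normal),
    Monotone c ∧ c 0 = N ∧ (∀ i, n ≤ i → c i = ⊤) ∧
    ∀ i, IsCyclic (↥(c (i+1)) ⧸ (c i).subgroupOf (c (i+1)))

private lemma USS.nchainFrom_bot_iff :
    USS.NChainFrom (⊥ : Subgroup G) ↔ IsSupersolvableGroup G := by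
  constructor
  · rintro ⟨n, c, hnorm, hmono, h0, htop, hcyc⟩
    refine ⟨n, fun i => c i.val, fun i => hnorm i.val, fun i j hij => hmono hij, h0,
      htop n le_rfl, fun i => hcyc i.val⟩
  · rintro ⟨n, c, hnorm, hmono, h0, htop, hcyc⟩
    refine ⟨n, fun i => c ⟨min i n, by omega⟩, fun i => hnorm _,
      fun i j hij => hmono (by simp only [Fin.mk_le_mk]; omega), ?_, fun i hi => ?_, fun i => ?_⟩
    · beta_reduce
      have e : (⟨min 0 n, by omega⟩ : Fin (n+1)) = 0 := by ext; simp
      rw [e, h0]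
    · beta_reduce
      have e : (⟨min i n, by omega⟩ : Fin (n+1)) = Fin.last n := by
        ext; simp only [Fin.val_last]; omega
      rw [e, htop]
    · beta_reduce
      by_cases hi : i < n
      · have e1 : (⟨min i n, by omega⟩ : Fin (n+1)) = (⟨i, hi⟩ : Fin n).castSucc := by
          ext; simp only [Fin.castSucc_mk]; omega
        have e2 : (⟨min (i+1) n, by omega⟩ : Fin (n+1)) = (⟨i, hi⟩ : Fin n).succ := by
          ext; simp only [Fin.succ_mk]; omega
        exact USS.isCyclic_congr ((hnorm _).subgroupOf _) ((hnorm _).subgroupOf _)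
          (congrArg c e1) (congrArg c e2) (hcyc ⟨i, hi⟩)
      · have e2 : (⟨min (i+1) n, by omega⟩ : Fin (n+1)) = ⟨min i n, by omega⟩ := by
          ext; simp only []; omega
        exact USS.isCyclic_congr ((hnorm _).subgroupOf _) ((hnorm _).subgroupOf _)
          rfl (congrArg c e2) (USS.isCyclic_selfquot _ ((hnorm _).subgroupOf _))

private lemma USS.nchainFrom_iff_quot (N : Subgroup G) (hN : N.Normal) :
    USS.NChainFrom N ↔ IsSupersolvableGroup (G ⧸ N) := by
  constructor
  · rintro ⟨n, c, hnorm, hmono, h0, htop, hcyc⟩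
    rw [← USS.nchainFrom_bot_iff]
    refine ⟨n, fun i => (c i).map (QuotientGroup.mk' N),
      fun i => (hnorm i).map _ (QuotientGroup.mk'_surjective N),
      fun i j hij => Subgroup.map_mono (hmono hij), ?_, fun i hi => ?_, fun i => ?_⟩
    · beta_reduce; rw [h0, Subgroup.map_eq_bot_iff, QuotientGroup.ker_mk']
    · beta_reduce; rw [htop i hi, Subgroup.map_top_of_surjective _ (QuotientGroup.mk'_surjective N)]
    · beta_reduce
      haveI := ((hnorm (i+1)).map _ (QuotientGroup.mk'_surjective N))
      haveI := ((hnorm i).map _ (QuotientGroup.mk'_surjective N)).subgroupOf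
        ((c (i+1)).map (QuotientGroup.mk' N))
      obtain ⟨g, hg⟩ := USS.subquot_surj (QuotientGroup.mk' N) (c i) (c (i+1))
        ((c i).map _) ((c (i+1)).map _)
        ((hnorm i).subgroupOf _) (((hnorm i).map _ (QuotientGroup.mk'_surjective N)).subgroupOf _)
        (fun x hx => Subgroup.mem_map_of_mem _ hx) (fun x hx => Subgroup.mem_map_of_mem _ hx)
        (fun y hy => by obtain ⟨x, hx, rfl⟩ := Subgroup.mem_map.mp hy; exact ⟨x, hx, rfl⟩)
      haveI := hcyc i
      exact isCyclic_of_surjective g hg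
  · intro hss
    rw [← USS.nchainFrom_bot_iff] at hss
    obtain ⟨n, c, hnorm, hmono, h0, htop, hcyc⟩ := hss
    refine ⟨n, fun i => (c i).comap (QuotientGroup.mk' N), fun i => (hnorm i).comap _,
      fun i j hij => Subgroup.comap_mono (hmono hij), ?_, fun i hi => ?_, fun i => ?_⟩
    · beta_reduce; rw [h0, MonoidHom.comap_bot, QuotientGroup.ker_mk']
    · beta_reduce; rw [htop i hi, Subgroup.comap_top]
    · beta_reduce
      haveI := ((hnorm i).comap (QuotientGroup.mk' N)).subgroupOf
        ((c (i+1)).comap (QuotientGroup.mk' N))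
      obtain ⟨g, hg⟩ := USS.subquot_inj (QuotientGroup.mk' N)
        ((c i).comap _) ((c (i+1)).comap _) (c i) (c (i+1))
        (((hnorm i).comap _).subgroupOf _) ((hnorm i).subgroupOf _)
        (fun x hx => hx) (fun x hx => hx) (fun x _ hx => hx)
      exact USS.isCyclic_of_injective g hg (hcyc i)

private lemma USS.normal_inf {N M : Subgroup G} (hN : N.Normal) (hM : M.Normal) :
    (N ⊓ M).Normal := by
  constructor
  intro x hx g
  exact ⟨hN.conj_mem _ hx.1 g, hM.conj_mem _ hx.2 g⟩

private lemma USS.nchainFrom_inf {N M : Subgroup G} (hN : N.Normal)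
    (hcN : USS.NChainFrom N) (hcM : USS.NChainFrom M) : USS.NChainFrom (N ⊓ M) := by
  obtain ⟨n, c, hcnorm, hcmono, hc0, hctop, hccyc⟩ := hcN
  obtain ⟨m, d, hdnorm, hdmono, hd0, hdtop, hdcyc⟩ := hcM
  have hnormE : ∀ i, (if i ≤ m then N ⊓ d i else c (i - m)).Normal := by
    intro i
    split
    · exact USS.normal_inf hN (hdnorm i)
    · exact hcnorm _
  refine ⟨m + 1 + n, fun i => if i ≤ m then N ⊓ d i else c (i - m), hnormE, ?_, ?_, ?_, ?_⟩
  · apply monotone_nat_of_le_succ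
    intro i
    beta_reduce
    rcases Nat.lt_trichotomy i m with hi | rfl | hi
    · rw [if_pos (by omega), if_pos (by omega)]
      exact inf_le_inf le_rfl (hdmono (by omega))
    · rw [if_pos le_rfl, if_neg (by omega)]
      refine le_trans inf_le_left ?_
      rw [show i + 1 - i = 1 by omega, ← hc0]
      exact hcmono (by omega)
    · rw [if_neg (by omega), if_neg (by omega)]
      exact hcmono (by omega)
  · beta_reduce; rw [if_pos (by omega), hd0]
  · intro i hi
    beta_reduce
    rw [if_neg (by omega), hctop _ (by omega)]
  · intro i
    beta_reduce
    rcases Nat.lt_trichotomy i m with hi | rfl | hi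
    · have hcyc1 : IsCyclic (↥(N ⊓ d (i+1)) ⧸ (N ⊓ d i).subgroupOf (N ⊓ d (i+1))) := by
        obtain ⟨g, hg⟩ := USS.subquot_inj (MonoidHom.id G) (N ⊓ d i) (N ⊓ d (i+1))
          (d i) (d (i+1))
          ((USS.normal_inf hN (hdnorm i)).subgroupOf _) ((hdnorm i).subgroupOf _)
          (fun x hx => hx.2) (fun x hx => hx.2) (fun x hx h2 => ⟨hx.1, h2⟩)
        exact USS.isCyclic_of_injective g hg (hdcyc i)
      exact USS.isCyclic_congr ((hnormE i).subgroupOf _)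
        ((USS.normal_inf hN (hdnorm i)).subgroupOf _)
        (if_pos (by omega)) (if_pos (by omega)) hcyc1
    · have hcyc1 : IsCyclic (↥(c 1) ⧸ (N ⊓ d i).subgroupOf (c 1)) := by
        obtain ⟨g, hg⟩ := USS.subquot_inj (MonoidHom.id G) (N ⊓ d i) (c 1) (c 0) (c 1)
          ((USS.normal_inf hN (hdnorm i)).subgroupOf _) ((hcnorm 0).subgroupOf _)
          (fun x hx => hx) (fun x hx => by rw [hc0]; exact hx.1)
          (fun x _ h2 => ⟨by rw [hc0] at h2; exact h2, by rw [hdtop i le_rfl]; trivial⟩)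
        exact USS.isCyclic_of_injective g hg (hccyc 0)
      exact USS.isCyclic_congr ((hnormE i).subgroupOf _)
        ((USS.normal_inf hN (hdnorm i)).subgroupOf _)
        (if_pos le_rfl) ((if_neg (by omega)).trans (congrArg c (by omega))) hcyc1
    · exact USS.isCyclic_congr ((hnormE i).subgroupOf _) ((hcnorm (i-m)).subgroupOf _)
        (if_neg (by omega)) ((if_neg (by omega)).trans (congrArg c (by omega)))
        (hccyc (i - m))

end SSAux2
section SSAux3

open Function

variable {G : Type*} [Group G]

private lemma USS.ss_of_subsingleton (X : Type*) [Group X] [Subsingleton X] :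
    IsSupersolvableGroup X := by
  refine ⟨0, fun _ => ⊥, fun _ => inferInstance, monotone_const, rfl, ?_, fun i => i.elim0⟩
  apply Subsingleton.elim

private lemma USS.uResidual_mem [Finite G] :
    IsSupersolvableGroup (G ⧸ uResidual G) := by
  classical
  set S := {N : Subgroup G | ∃ h : N.Normal, letI := h; IsSupersolvableGroup (G ⧸ N)} with hS
  have htop : (⊤ : Subgroup G) ∈ S := by
    refine ⟨inferInstance, ?_⟩
    haveI : Subsingleton (G ⧸ (⊤ : Subgroup G)) := QuotientGroup.subsingleton_quotient_top
    exact USS.ss_of_subsingleton _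
  have hinf : ∀ N M : Subgroup G, N ∈ S → M ∈ S → N ⊓ M ∈ S := by
    rintro N M ⟨hN, hNs⟩ ⟨hM, hMs⟩
    have h1 : USS.NChainFrom N := (USS.nchainFrom_iff_quot N hN).mpr hNs
    have h2 : USS.NChainFrom M := (USS.nchainFrom_iff_quot M hM).mpr hMs
    have h3 := USS.nchainFrom_inf hN h1 h2
    exact ⟨USS.normal_inf hN hM, (USS.nchainFrom_iff_quot _ (USS.normal_inf hN hM)).mp h3⟩
  have key : ∀ s : Finset (Subgroup G), ↑s ⊆ S → s.inf id ∈ S := by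
    intro s
    induction s using Finset.induction_on with
    | empty => intro _; simpa using htop
    | insert _ _ hni ih =>
      intro hsub
      rw [Finset.inf_insert]
      exact hinf _ _ (hsub (Finset.mem_insert_self _ _))
        (ih (fun b hb => hsub (Finset.mem_insert_of_mem hb)))
  have hfin : S.Finite := Set.toFinite S
  have hmem : sInf S ∈ S := by
    have heq : sInf S = hfin.toFinset.inf id :=
      le_antisymm (le_trans (le_of_eq rfl)
          (Finset.le_inf fun b hb => sInf_le (hfin.mem_toFinset.mp hb)))
        (le_sInf fun b hb => Finset.inf_le (hfin.mem_toFinset.mpr hb))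
    rw [heq]
    exact key _ (fun b hb => hfin.mem_toFinset.mp hb)
  have : uResidual G ∈ S := hmem
  obtain ⟨h, hss⟩ := this
  exact hss

private lemma USS.quot_ss_of_le [Finite G] {N : Subgroup G} (hN : N.Normal)
    (h : uResidual G ≤ N) : IsSupersolvableGroup (G ⧸ N) := by
  have hsurj : Function.Surjective
      (QuotientGroup.map (uResidual G) N (MonoidHom.id G) (by simpa using h)) := by
    intro z
    refine QuotientGroup.induction_on z fun x => ?_
    exact ⟨QuotientGroup.mk x, rfl⟩
  exact USS.supersolvable_of_surjective _ hsurj USS.uResidual_mem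

private lemma USS.top_subtype_surjective :
    Function.Surjective ((⊤ : Subgroup G).subtype) :=
  fun x => ⟨⟨x, Subgroup.mem_top x⟩, rfl⟩

/-- If `uResidual G ≤ M` then the top-quotient by the core of `M` is supersolvable. -/
private lemma USS.ss_top_quot [Finite G] {M : Subgroup G} (hPM : uResidual G ≤ M) :
    IsSupersolvableGroup
      (↥(⊤ : Subgroup G) ⧸ ((M.subgroupOf (⊤ : Subgroup G)).normalCore)) := by
  set K := (M.subgroupOf (⊤ : Subgroup G)).normalCore with hK
  haveI : ((uResidual G).subgroupOf (⊤ : Subgroup G)).Normal :=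
    (uResidual_normal G).subgroupOf _
  have hPK : (uResidual G).subgroupOf (⊤ : Subgroup G) ≤ K :=
    Subgroup.normal_le_normalCore.mpr (fun x hx => Subgroup.mem_subgroupOf.mpr
      (hPM (Subgroup.mem_subgroupOf.mp hx)))
  let f : G →* (↥(⊤ : Subgroup G) ⧸ K) :=
    (QuotientGroup.mk' K).comp
      ((MonoidHom.id G).codRestrict (⊤ : Subgroup G) (fun x => Subgroup.mem_top x))
  have hker : uResidual G ≤ f.ker := by
    intro x hx
    show (QuotientGroup.mk' K) _ = 1
    rw [QuotientGroup.mk'_apply, QuotientGroup.eq_one_iff]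
    exact hPK (Subgroup.mem_subgroupOf.mpr hx)
  have hsurj : Function.Surjective (QuotientGroup.lift (uResidual G) f hker) := by
    intro z
    refine QuotientGroup.induction_on z fun y => ?_
    refine ⟨QuotientGroup.mk (y : G), ?_⟩
    rw [QuotientGroup.lift_mk]
    show QuotientGroup.mk _ = QuotientGroup.mk y
    congr 1
  exact USS.supersolvable_of_surjective _ hsurj USS.uResidual_mem

/-- From supersolvability of a top-quotient core, extract a normal subgroup of `G`. -/
private lemma USS.extract_normal {A : Subgroup G}
    (hss : IsSupersolvableGroup
      (↥(⊤ : Subgroup G) ⧸ ((A.subgroupOf (⊤ : Subgroup G)).normalCore))) :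
    ∃ (N : Subgroup G) (_ : N.Normal), N ≤ A ∧ IsSupersolvableGroup (G ⧸ N) := by
  set K := (A.subgroupOf (⊤ : Subgroup G)).normalCore with hKdef
  set N := K.map (⊤ : Subgroup G).subtype with hNdef
  have hNnormal : N.Normal :=
    (Subgroup.normalCore_normal _).map _ USS.top_subtype_surjective
  have hNle : N ≤ A := by
    refine le_trans (Subgroup.map_mono (Subgroup.normalCore_le _)) ?_
    rw [Subgroup.subgroupOf_map_subtype]
    exact inf_le_left
  refine ⟨N, hNnormal, hNle, ?_⟩
  have hker : K ≤ ((QuotientGroup.mk' N).comp (⊤ : Subgroup G).subtype).ker := by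
    intro x hx
    show (QuotientGroup.mk' N) _ = 1
    rw [QuotientGroup.mk'_apply, QuotientGroup.eq_one_iff]
    exact Subgroup.mem_map_of_mem _ hx
  have hsurj : Function.Surjective (QuotientGroup.lift K _ hker) := by
    intro z
    refine QuotientGroup.induction_on z fun y => ?_
    exact ⟨QuotientGroup.mk (⟨y, Subgroup.mem_top y⟩ : ↥(⊤ : Subgroup G)),
      by rw [QuotientGroup.lift_mk]; rfl⟩
  exact USS.supersolvable_of_surjective _ hsurj hss

end SSAux3
section SSAux4

open Function

variable {G : Type*} [Group G]

private lemma USS.eq_of_le_of_card_le [Finite G] {H M : Subgroup G} (h : H ≤ M)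
    (hc : Nat.card ↥M ≤ Nat.card ↥H) : H = M := by
  have h1 : (H : Set G) = (M : Set G) := by
    refine Set.eq_of_subset_of_ncard_le h ?_ (Set.toFinite _)
    have h2 : Nat.card ↥(M : Set G) ≤ Nat.card ↥(H : Set G) := hc
    rwa [Nat.card_coe_set_eq, Nat.card_coe_set_eq] at h2
  exact SetLike.ext' h1

private lemma USS.card_lt_of_lt [Finite G] {H K : Subgroup G} (h : H < K) :
    Nat.card ↥H < Nat.card ↥K := by
  have h2 : Nat.card ↥(H : Set G) < Nat.card ↥(K : Set G) := by
    rw [Nat.card_coe_set_eq, Nat.card_coe_set_eq]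
    exact Set.ncard_lt_ncard (SetLike.coe_ssubset_coe.mpr h) (Set.toFinite _)
  exact h2

private lemma USS.exists_chain_aux [Finite G] (M : Subgroup G) :
    ∀ (k : ℕ) (H : Subgroup G), H ≤ M → Nat.card ↥M - Nat.card ↥H ≤ k →
    ∃ (n : ℕ) (c : Fin (n+1) → Subgroup G), c 0 = H ∧ c (Fin.last n) = M ∧
      (∀ i, c i ≤ M) ∧ ∀ i : Fin n, IsMaximalSubgroupOf (c i.castSucc) (c i.succ) := by
  intro k
  induction k with
  | zero =>
    intro H hHM hcard
    have : H = M := USS.eq_of_le_of_card_le hHM (by omega)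
    subst this
    exact ⟨0, fun _ => H, rfl, rfl, fun _ => le_rfl, fun i => i.elim0⟩
  | succ k ih =>
    intro H hHM hcard
    by_cases heq : H = M
    · subst heq
      exact ⟨0, fun _ => H, rfl, rfl, fun _ => le_rfl, fun i => i.elim0⟩
    have hlt : H < M := lt_of_le_of_ne hHM heq
    obtain ⟨K, hKmem, hKmin⟩ := Set.Finite.exists_minimal (s := {Y : Subgroup G | H < Y ∧ Y ≤ M})
      (Set.toFinite _) ⟨M, hlt, le_rfl⟩
    have hmax : IsMaximalSubgroupOf H K := by
      refine ⟨hKmem.1, fun X hHX hXK => ?_⟩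
      by_cases hXH : X = H
      · exact Or.inl hXH
      · refine Or.inr ?_
        have hX : X ∈ {Y : Subgroup G | H < Y ∧ Y ≤ M} :=
          ⟨lt_of_le_of_ne hHX (Ne.symm hXH), hXK.trans hKmem.2⟩
        exact le_antisymm hXK (hKmin hX hXK)
    have hcardK : Nat.card ↥H < Nat.card ↥K := USS.card_lt_of_lt hKmem.1
    obtain ⟨n, c, hc0, hclast, hcle, hcstep⟩ := ih K hKmem.2 (by omega)
    refine ⟨n + 1, Fin.cons H c, Fin.cons_zero _ _, ?_, ?_, ?_⟩
    · rw [← Fin.succ_last, Fin.cons_succ, hclast]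
    · intro i
      refine Fin.cases ?_ ?_ i
      · rw [Fin.cons_zero]; exact hHM
      · intro j; rw [Fin.cons_succ]; exact hcle j
    · intro i
      refine Fin.cases ?_ ?_ i
      · rw [Fin.castSucc_zero, Fin.cons_zero, Fin.succ_zero_eq_one]
        have : (Fin.cons H c : Fin (n+2) → Subgroup G) 1 = c 0 := by
          rw [show (1 : Fin (n+2)) = Fin.succ 0 by rfl, Fin.cons_succ]
        rw [this, hc0]
        exact hmax
      · intro j
        rw [← Fin.succ_castSucc, Fin.cons_succ, Fin.cons_succ]
        exact hcstep j

end SSAux4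
section SSAux5

variable {G : Type*} [Group G]

private lemma USS.step_congr {K L K' L' : Subgroup G} (hK : K' = K) (hL : L' = L)
    (h : IsMaximalSubgroupOf K L ∧
      IsSupersolvableGroup (↥L ⧸ ((K.subgroupOf L).normalCore))) :
    IsMaximalSubgroupOf K' L' ∧
      IsSupersolvableGroup (↥L' ⧸ ((K'.subgroupOf L').normalCore)) := by
  subst hK; subst hL; exact h

end SSAux5

theorem statement_15 {G : Type*} [Group G] [Finite G] (hsol : IsSolvable G)
    (hns : ¬ IsSupersolvableGroup G)
    (hcrit : ∀ H : Subgroup G, H ≠ ⊤ → IsSupersolvableGroup ↥H) :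
    ∀ A : Subgroup G, A ≠ ⊥ → frattini G ⊓ uResidual G ≤ A →
      USubnormal A ∨ UAbnormal A := by
  intro A hAbot hDA
  set P := uResidual G with hPdef
  haveI hPn : P.Normal := uResidual_normal G
  -- every proper normal subgroup of P (normal in G) lies in the Frattini subgroup
  have hC2 : ∀ X : Subgroup G, X.Normal → X ≤ P → X ≠ P → X ≤ frattini G ⊓ P := by
    intro X hX hXP hXne
    refine le_inf ?_ hXP
    by_contra hXfr
    have hM : ∃ M : Subgroup G, IsCoatom M ∧ ¬ X ≤ M := by
      by_contra hall
      push_neg at hall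
      refine hXfr ?_
      show X ≤ frattini G
      rw [frattini, Order.radical]
      exact le_iInf₂ fun M hM => hall M hM
    obtain ⟨M, hMco, hXM⟩ := hM
    have hsupXM : X ⊔ M = ⊤ := by
      have h1 : M < X ⊔ M := right_lt_sup.mpr hXM
      exact hMco.2 _ h1
    haveI := hX
    have hsurj : Function.Surjective ((QuotientGroup.mk' X).comp M.subtype) := by
      intro z
      refine QuotientGroup.induction_on z fun y => ?_
      have hy : y ∈ (↑(X ⊔ M) : Set G) := by rw [hsupXM]; trivial
      rw [Subgroup.normal_mul, Set.mem_mul] at hy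
      obtain ⟨x, hx, m, hm, rfl⟩ := hy
      refine ⟨⟨m, hm⟩, ?_⟩
      show QuotientGroup.mk m = QuotientGroup.mk (x * m)
      rw [QuotientGroup.eq]
      have h3 := hX.conj_mem _ hx m⁻¹
      have h4 : m⁻¹ * (x * m) = m⁻¹ * x * m⁻¹⁻¹ := by group
      rw [h4]
      exact h3
    have hssX : IsSupersolvableGroup (G ⧸ X) :=
      USS.supersolvable_of_surjective _ hsurj (hcrit M hMco.1)
    have hPX : P ≤ X := sInf_le ⟨hX, hssX⟩
    exact hXne (le_antisymm hXP hPX)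
  have hcomm : ⁅P, P⁆ ≤ frattini G ⊓ P := by
    by_cases h : ⁅P, P⁆ = P
    · have hPbot : P = ⊥ := by
        obtain ⟨k, hk⟩ := hsol.solvable
        have hle : ∀ j, P ≤ derivedSeries G j := by
          intro j
          induction j with
          | zero => exact le_top
          | succ j ih =>
            rw [derivedSeries_succ]
            calc P = ⁅P, P⁆ := h.symm
            _ ≤ _ := Subgroup.commutator_mono ih ih
        exact le_bot_iff.mp (hk ▸ hle k)
      rw [h, hPbot]
      exact bot_le
    · exact hC2 ⁅P, P⁆ inferInstance (Subgroup.commutator_le_left P P) h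
  by_cases hsup : A ⊔ P = ⊤
  · right
    have key : ∀ X : Subgroup G, A ≤ X → X ≠ ⊤ → X = A := by
      intro X hAX hXtop
      have hXPtop : X ⊔ P = ⊤ := by
        rw [eq_top_iff, ← hsup]
        exact sup_le_sup_right hAX P
      have hW : (X ⊓ P).Normal := by
        rw [← Subgroup.normalizer_eq_top_iff, eq_top_iff, ← hXPtop]
        refine sup_le ?_ ?_
        · intro x hx
          rw [Subgroup.mem_normalizer_iff]
          intro w
          constructor
          · rintro ⟨hw1, hw2⟩
            exact ⟨X.mul_mem (X.mul_mem hx hw1) (X.inv_mem hx), hPn.conj_mem w hw2 x⟩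
          · rintro ⟨hw1, hw2⟩
            constructor
            · have h3 : x⁻¹ * (x * w * x⁻¹) * x ∈ X :=
                X.mul_mem (X.mul_mem (X.inv_mem hx) hw1) hx
              have h4 : w = x⁻¹ * (x * w * x⁻¹) * x := by group
              rw [h4]; exact h3
            · have h3 := hPn.conj_mem _ hw2 x⁻¹
              have h4 : w = x⁻¹ * (x * w * x⁻¹) * x⁻¹⁻¹ := by group
              rw [h4]; exact h3
        · intro p hp
          open scoped commutatorElement in
          have key2 : ∀ q ∈ P, ∀ w, w ∈ X ⊓ P → q * w * q⁻¹ ∈ X ⊓ P := by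
            rintro q hq w ⟨hw1, hw2⟩
            have hcq : ⁅q, w⁆ ∈ ⁅P, P⁆ := Subgroup.commutator_mem_commutator hq hw2
            have heq : q * w * q⁻¹ = ⁅q, w⁆ * w := by
              rw [commutatorElement_def]; group
            rw [heq]
            exact ⟨X.mul_mem (hAX (hDA (hcomm hcq))) hw1,
              P.mul_mem ((hcomm hcq).2) hw2⟩
          rw [Subgroup.mem_normalizer_iff]
          intro w
          constructor
          · exact fun hw => key2 p hp w hw
          · intro hw
            have h3 := key2 p⁻¹ (P.inv_mem hp) _ hw
            have h4 : w = p⁻¹ * (p * w * p⁻¹) * p⁻¹⁻¹ := by group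
            rw [h4]; exact h3
      have hWne : X ⊓ P ≠ P := by
        intro h
        have hPX : P ≤ X := h ▸ inf_le_left
        exact hXtop (by rw [← hXPtop, sup_eq_left.mpr hPX])
      have hWD : X ⊓ P ≤ frattini G ⊓ P := hC2 _ hW inf_le_right hWne
      refine le_antisymm ?_ hAX
      intro x hx
      have hxT : x ∈ (↑(A ⊔ P) : Set G) := by rw [hsup]; trivial
      rw [Subgroup.mul_normal, Set.mem_mul] at hxT
      obtain ⟨a, ha, p, hp, rfl⟩ := hxT
      have hpX : p ∈ X := by
        have h4 : p = a⁻¹ * (a * p) := by group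
        rw [h4]
        exact X.mul_mem (X.inv_mem (hAX ha)) hx
      exact A.mul_mem ha (hDA (hWD ⟨hpX, hp⟩))
    intro K L hAK hKL
    have hKne : K ≠ ⊤ := ne_top_of_lt hKL.1
    have hKA : K = A := key K hAK hKne
    have hLtop : L = ⊤ := by
      by_contra hL
      have hLA : L = A := key L (hKA ▸ hKL.1.le) hL
      have : K < A := hLA ▸ hKL.1
      rw [hKA] at this
      exact lt_irrefl A this
    intro hss
    rw [hKA, hLtop] at hss
    obtain ⟨N, hNn, hNle, hNss⟩ := USS.extract_normal hss
    have hPN : P ≤ N := sInf_le ⟨hNn, hNss⟩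
    have hA_top : A = ⊤ := by rw [← hsup, sup_eq_left.mpr (hPN.trans hNle)]
    exact hKne (hKA.trans hA_top)
  · left
    have hAne : A ≠ ⊤ := fun h => hsup (by rw [h, top_sup_eq])
    refine ⟨hAne, ?_⟩
    obtain ⟨M, hMco, hleM⟩ := Or.resolve_left (eq_top_or_exists_le_coatom (A ⊔ P)) hsup
    obtain ⟨n, c, hc0, hclast, hcle, hcstep⟩ :=
      USS.exists_chain_aux M (Nat.card ↥M - Nat.card ↥A) A (le_sup_left.trans hleM) le_rfl
    have hMne : M ≠ ⊤ := hMco.1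
    refine ⟨n + 1, Fin.snoc c ⊤, ?_, by rw [Fin.snoc_last], ?_⟩
    · rw [← Fin.castSucc_zero, Fin.snoc_castSucc, hc0]
    · intro i
      induction i using Fin.lastCases with
      | last =>
        refine USS.step_congr (K := M) (L := (⊤ : Subgroup G)) ?_ ?_ ?_
        · rw [Fin.snoc_castSucc, hclast]
        · rw [Fin.succ_last, Fin.snoc_last]
        refine ⟨⟨lt_top_iff_ne_top.mpr hMne, fun Y hY1 _ => ?_⟩, ?_⟩
        · by_cases h : Y = M
          · exact Or.inl h
          · exact Or.inr (hMco.2 Y (lt_of_le_of_ne hY1 (Ne.symm h)))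
        · exact USS.ss_top_quot (le_sup_right.trans hleM)
      | cast j =>
        refine USS.step_congr (K := c j.castSucc) (L := c j.succ) ?_ ?_ ?_
        · rw [Fin.snoc_castSucc]
        · rw [Fin.succ_castSucc, Fin.snoc_castSucc]
        refine ⟨hcstep j, ?_⟩
        have hLne : c j.succ ≠ ⊤ := by
          intro h
          exact hMne (top_le_iff.mp (h ▸ hcle j.succ))
        exact USS.supersolvable_of_surjective _ (QuotientGroup.mk'_surjective _)
          (hcrit _ hLne)
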